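/- (Error bound under model mismatch.) Suppose y_B = Φ_B A x₀ + z with ‖Φ z‖ ≤ δ and Φ(Φ_B − I)A x₀ = 0 (the reconstruction filter annihilates the model mismatch at x₀). If x_⋆ minimizes T(x) = ‖Φ(Ax − y_B)‖² + α R(x) with R ≥ 0, then ‖Φ(A x_⋆ − A x₀)‖ ≤ 2δ + √(α R(x₀)). -/
import Mathlib


/-- Error bound under model mismatch: if `y_B = Φ_B A x₀ + z` with `‖Φ z‖ ≤ δ`
and the reconstruction filter annihilates the model mismatch at `x₀`, then a
minimizer `x⋆` of the relaxed Tikhonov functional satisfies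
`‖Φ A(x⋆ − x₀)‖ ≤ 2δ + √(α R(x₀))`. -/
theorem error_bound_model_mismatch {N M : ℕ}
    (A : EuclideanSpace ℝ (Fin N) →ₗ[ℝ] EuclideanSpace ℝ (Fin M))
    (Φ ΦB : EuclideanSpace ℝ (Fin M) →ₗ[ℝ] EuclideanSpace ℝ (Fin M))
    (x₀ : EuclideanSpace ℝ (Fin N)) (z yB : EuclideanSpace ℝ (Fin M))
    (hyB : yB = ΦB (A x₀) + z) (δ : ℝ) (hz : ‖Φ z‖ ≤ δ)
    (hmismatch : Φ (ΦB (A x₀) - A x₀) = 0)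
    (R : EuclideanSpace ℝ (Fin N) → ℝ) (hR : ∀ x, 0 ≤ R x)
    (α : ℝ) (hα : 0 < α)
    (xstar : EuclideanSpace ℝ (Fin N))
    (hmin : ∀ x, ‖Φ (A xstar - yB)‖ ^ 2 + α * R xstar ≤ ‖Φ (A x - yB)‖ ^ 2 + α * R x) :
    ‖Φ (A xstar - A x₀)‖ ≤ 2 * δ + Real.sqrt (α * R x₀) := by
  have hδ0 : 0 ≤ δ := le_trans (norm_nonneg _) hz
  -- Φ (A x₀ - yB) = - Φ z
  have hkey : Φ (A x₀ - yB) = -Φ z := by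
    have : A x₀ - yB = -(ΦB (A x₀) - A x₀) - z := by rw [hyB]; abel
    rw [this, map_sub, map_neg, hmismatch]
    simp
  have hnorm0 : ‖Φ (A x₀ - yB)‖ ≤ δ := by rw [hkey, norm_neg]; exact hz
  have hRs : 0 ≤ α * R x₀ := mul_nonneg hα.le (hR x₀)
  have h1 : ‖Φ (A xstar - yB)‖ ^ 2 ≤ δ ^ 2 + α * R x₀ := by
    have := hmin x₀
    have h2 : ‖Φ (A x₀ - yB)‖ ^ 2 ≤ δ ^ 2 := by
      have := sq_le_sq' (by linarith [norm_nonneg (Φ (A x₀ - yB))]) hnorm0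
      simpa using this
    nlinarith [mul_nonneg hα.le (hR xstar)]
  have h3 : ‖Φ (A xstar - yB)‖ ≤ δ + Real.sqrt (α * R x₀) := by
    have hs : Real.sqrt (α * R x₀) ^ 2 = α * R x₀ := Real.sq_sqrt hRs
    nlinarith [norm_nonneg (Φ (A xstar - yB)), Real.sqrt_nonneg (α * R x₀),
      sq_nonneg (‖Φ (A xstar - yB)‖ - (δ + Real.sqrt (α * R x₀)))]
  have htri : ‖Φ (A xstar - A x₀)‖ ≤ ‖Φ (A xstar - yB)‖ + ‖Φ (A x₀ - yB)‖ := by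
    have hv : A xstar - A x₀ = (A xstar - yB) - (A x₀ - yB) := by abel
    rw [hv, map_sub]
    exact norm_sub_le _ _
  linarith
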